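/- Every Borel subset of κ^ω is U-measurable. -/

import Mathlib

universe u

namespace UMeas

variable {A : Type u}

/-- The first `n` values of an infinite sequence, as a list. -/
def seg (s : ℕ → A) (n : ℕ) : List A := List.ofFn (fun i : Fin n => s i)

/-- `T` is a `U`-branching tree: a set of finite sequences closed under initial
segments, containing the empty sequence, whose branching sets are in `U`. -/
def IsUTree (U : Ultrafilter A) (T : Set (List A)) : Prop :=
  ([] ∈ T) ∧ (∀ σ ∈ T, ∀ τ : List A, τ <+: σ → τ ∈ T) ∧
    ∀ σ ∈ T, {a : A | σ ++ [a] ∈ T} ∈ U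

/-- The set of infinite branches through `T`. -/
def branches (T : Set (List A)) : Set (ℕ → A) := {s | ∀ n, seg s n ∈ T}

/-- Concatenation `σ⌢s` of a finite sequence with an infinite sequence. -/
def app (σ : List A) (s : ℕ → A) : ℕ → A :=
  fun n => if h : n < σ.length then σ.get ⟨n, h⟩ else s (n - σ.length)

/-- The section `X↾σ = {s | σ⌢s ∈ X}`. -/
def sect (X : Set (ℕ → A)) (σ : List A) : Set (ℕ → A) := {s | app σ s ∈ X}

def ULarge (U : Ultrafilter A) (X : Set (ℕ → A)) : Prop :=
  ∃ T, IsUTree U T ∧ branches T ⊆ X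

def USmall (U : Ultrafilter A) (X : Set (ℕ → A)) : Prop :=
  ∃ T, IsUTree U T ∧ branches T ∩ X = ∅

def UDetermined (U : Ultrafilter A) (X : Set (ℕ → A)) : Prop :=
  ULarge U X ∨ USmall U X

def UNull (U : Ultrafilter A) (X : Set (ℕ → A)) : Prop :=
  ∀ σ : List A, USmall U (sect X σ)

def UMeasurable (U : Ultrafilter A) (X : Set (ℕ → A)) : Prop :=
  ∀ σ : List A, UDetermined U (sect X σ)

/-! If `X` is not `U`-large, then by gluing witnessing trees at the root, `U`-many sections
`X↾⟨a⟩` are not `U`-large either; so the positions `σ` at which `X↾σ` is not large form a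
`U`-branching tree. For open `X` this tree is disjoint from `X`, because every point of an open
set has an initial segment `σ` with `X↾σ` everything. For a countable union `⋃ n, f n` of
`U`-measurable sets that is not large, fuse into this tree, at each position `σ` of length `n`,
a tree witnessing that `(f n)↾σ` is small: a branch through the fused tree lying in `f n` would
pass through `σ` and then continue inside that witness. Complements being trivial, the
`U`-measurable sets form a σ-algebra containing the open sets.
-/

variable {U : Ultrafilter A} {X Y : Set (ℕ → A)} {σ : List A} {s : ℕ → A}

@[simp] lemma length_seg (s : ℕ → A) (n : ℕ) : (seg s n).length = n := by simp [seg]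

lemma seg_add (s : ℕ → A) (n j : ℕ) :
    seg s (n + j) = seg s n ++ seg (fun k => s (n + k)) j := by
  simp [seg, List.ofFn_add]

lemma app_of_lt (σ : List A) (s : ℕ → A) {n : ℕ} (h : n < σ.length) :
    app σ s n = σ[n] := dif_pos h

lemma app_of_le (σ : List A) (s : ℕ → A) {n : ℕ} (h : σ.length ≤ n) :
    app σ s n = s (n - σ.length) := dif_neg (Nat.not_lt.2 h)

lemma app_seg_of_lt (s t : ℕ → A) {m i : ℕ} (h : i < m) : app (seg s m) t i = s i := by
  rw [app_of_lt _ _ (by simpa using h)]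
  simp [seg]

lemma app_seg (s : ℕ → A) (n : ℕ) : app (seg s n) (fun k => s (n + k)) = s := by
  funext m
  rcases Nat.lt_or_ge m n with h | h
  · exact app_seg_of_lt s _ h
  · rw [app_of_le _ _ (by simpa using h), length_seg, Nat.add_sub_cancel' h]

lemma app_nil (s : ℕ → A) : app [] s = s := by
  funext n
  rw [app_of_le _ _ (Nat.zero_le n)]
  rfl

lemma app_app (σ τ : List A) (s : ℕ → A) : app σ (app τ s) = app (σ ++ τ) s := by
  funext n
  rcases Nat.lt_or_ge n σ.length with h₁ | h₁
  · rw [app_of_lt _ _ h₁, app_of_lt _ _ (by simp; omega), List.getElem_append_left h₁]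
  rw [app_of_le _ _ h₁]
  rcases Nat.lt_or_ge (n - σ.length) τ.length with h₂ | h₂
  · rw [app_of_lt _ _ h₂, app_of_lt _ _ (by simp; omega), List.getElem_append_right h₁]
  · rw [app_of_le _ _ h₂, app_of_le _ _ (by simp; omega), List.length_append, Nat.sub_sub]

lemma continuous_app [TopologicalSpace A] (σ : List A) : Continuous (app σ) := by
  refine continuous_pi fun n => ?_
  by_cases h : n < σ.length
  · simp only [app, dif_pos h]
    exact continuous_const
  · simp only [app, dif_neg h]
    exact continuous_apply _

lemma sect_nil (X : Set (ℕ → A)) : sect X [] = X := by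
  simp [sect, app_nil]

lemma sect_sect (X : Set (ℕ → A)) (σ τ : List A) : sect (sect X σ) τ = sect X (σ ++ τ) := by
  ext s
  simp [sect, app_app]

lemma sect_iUnion {ι : Sort*} (f : ι → Set (ℕ → A)) (σ : List A) :
    sect (⋃ i, f i) σ = ⋃ i, sect (f i) σ :=
  Set.preimage_iUnion

lemma isOpen_sect [TopologicalSpace A] (hY : IsOpen Y) (σ : List A) : IsOpen (sect Y σ) :=
  hY.preimage (continuous_app σ)

lemma isUTree_univ : IsUTree U Set.univ :=
  ⟨trivial, fun _ _ _ _ => trivial, fun _ _ => U.univ_mem⟩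

lemma IsUTree.inter {T T' : Set (List A)} (hT : IsUTree U T) (hT' : IsUTree U T') :
    IsUTree U (T ∩ T') :=
  ⟨⟨hT.1, hT'.1⟩, fun σ hσ τ hτ => ⟨hT.2.1 σ hσ.1 τ hτ, hT'.2.1 σ hσ.2 τ hτ⟩,
    fun σ hσ => Filter.inter_mem (hT.2.2 σ hσ.1) (hT'.2.2 σ hσ.2)⟩

lemma exists_isUTree_imp {p : Prop} {q : Set (List A) → Prop}
    (h : p → ∃ T, IsUTree U T ∧ q T) : ∃ T, IsUTree U T ∧ (p → q T) := by
  by_cases hp : p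
  · obtain ⟨T, hT, hq⟩ := h hp
    exact ⟨T, hT, fun _ => hq⟩
  · exact ⟨Set.univ, isUTree_univ, fun h' => absurd h' hp⟩

lemma branches_inter (T T' : Set (List A)) : branches (T ∩ T') = branches T ∩ branches T' :=
  Set.ext fun _ => forall_and

def treeOf (P : List A → Prop) : Set (List A) := {σ | ∀ τ, τ <+: σ → P τ}

lemma isUTree_treeOf {P : List A → Prop} (h_nil : P [])
    (h_step : ∀ σ ∈ treeOf P, {a | P (σ ++ [a])} ∈ U) : IsUTree U (treeOf P) := by
  refine ⟨fun τ hτ => List.prefix_nil.1 hτ ▸ h_nil, fun σ hσ τ hτ ρ hρ => hσ ρ (hρ.trans hτ),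
    fun σ hσ => ?_⟩
  filter_upwards [h_step σ hσ] with a ha τ hτ
  rcases List.prefix_concat_iff.1 hτ with rfl | hτσ
  exacts [ha, hσ τ hτσ]

lemma apply_seg_of_mem_branches_treeOf {P : List A → Prop} (hs : s ∈ branches (treeOf P))
    (n : ℕ) : P (seg s n) :=
  hs n _ List.prefix_rfl

def diagInter (S : List A → Set (List A)) : Set (List A) :=
  {σ | ∀ n ≤ σ.length, σ.drop n ∈ S (σ.take n)}

lemma isUTree_diagInter {S : List A → Set (List A)} (hS : ∀ σ, IsUTree U (S σ)) :
    IsUTree U (diagInter S) := by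
  refine ⟨fun n hn => ?_, fun σ hσ τ hτ n hn => ?_, fun σ hσ => ?_⟩
  · obtain rfl : n = 0 := Nat.le_zero.1 hn
    exact (hS []).1
  · have h_take : τ.take n = σ.take n := by
      obtain ⟨r, rfl⟩ := hτ
      exact (List.take_append_of_le_length hn).symm
    rw [h_take]
    exact (hS _).2.1 _ (hσ n (hn.trans hτ.length_le)) _ (hτ.drop n)
  · have h_ext : ∀ᶠ a in (U : Filter A), ∀ n ∈ Set.Iic σ.length,
        σ.drop n ++ [a] ∈ S (σ.take n) :=
      (Filter.eventually_all_finite (Set.finite_Iic _)).2 fun n hn => (hS _).2.2 _ (hσ n hn)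
    filter_upwards [h_ext] with a ha n hn
    rcases Nat.lt_or_ge σ.length n with hσn | hnσ
    · rw [List.drop_eq_nil_of_le (by simp; omega)]
      exact (hS _).1
    · rw [List.drop_append_of_le_length hnσ, List.take_append_of_le_length hnσ]
      exact ha n hnσ

lemma shift_mem_branches_of_mem_branches_diagInter {S : List A → Set (List A)}
    (hs : s ∈ branches (diagInter S)) (n : ℕ) :
    (fun k => s (n + k)) ∈ branches (S (seg s n)) := by
  intro j
  have h := hs (n + j) n (by simp)
  rwa [seg_add, List.take_left' (length_seg s n), List.drop_left' (length_seg s n)] at h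

lemma ULarge.mono (h : ULarge U X) (hXY : X ⊆ Y) : ULarge U Y :=
  let ⟨T, hT, hTX⟩ := h
  ⟨T, hT, hTX.trans hXY⟩

lemma uLarge_univ : ULarge U (Set.univ : Set (ℕ → A)) :=
  ⟨Set.univ, isUTree_univ, Set.subset_univ _⟩

lemma uSmall_iff_uLarge_compl : USmall U X ↔ ULarge U Xᶜ := by
  refine exists_congr fun T => and_congr_right fun _ => ?_
  rw [Set.subset_compl_iff_disjoint_right, Set.disjoint_iff_inter_eq_empty]

lemma UDetermined.compl (h : UDetermined U X) : UDetermined U Xᶜ := by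
  unfold UDetermined at *
  rw [uSmall_iff_uLarge_compl] at h ⊢
  rw [compl_compl]
  exact h.symm

lemma uLarge_of_uLarge_sect_singleton (h : {a | ULarge U (sect X [a])} ∈ U) : ULarge U X := by
  choose S hS hSX using fun σ : List A =>
    exists_isUTree_imp (U := U) (q := fun T => branches T ⊆ sect X σ) id
  have h_root : IsUTree U (treeOf fun τ => τ.length = 1 → ULarge U (sect X τ)) := by
    refine isUTree_treeOf (by simp) fun σ _ => ?_
    rcases σ with _ | ⟨_, σ⟩
    · simpa using h
    · exact Filter.univ_mem' fun a ha => absurd ha (by simp)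
  refine ⟨_, h_root.inter (isUTree_diagInter hS), fun s hs => ?_⟩
  rw [branches_inter] at hs
  obtain ⟨hs_root, hs_diag⟩ := hs
  have h_large := apply_seg_of_mem_branches_treeOf hs_root 1 (length_seg s 1)
  have h_tail := hSX _ h_large (shift_mem_branches_of_mem_branches_diagInter hs_diag 1)
  rwa [sect, Set.mem_ofPred_eq, app_seg] at h_tail

lemma not_uLarge_sect_append_singleton (h : ¬ ULarge U (sect X σ)) :
    {a | ¬ ULarge U (sect X (σ ++ [a]))} ∈ U := by
  refine (Ultrafilter.compl_mem_iff_notMem (s := {a | ULarge U (sect X (σ ++ [a]))})).2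
    fun h' => h ?_
  refine uLarge_of_uLarge_sect_singleton (U.sets_of_superset h' fun a ha => ?_)
  show ULarge U (sect (sect X σ) [a])
  rw [sect_sect]
  exact ha

lemma isUTree_treeOf_not_uLarge (h : ¬ ULarge U X) :
    IsUTree U (treeOf fun σ => ¬ ULarge U (sect X σ)) :=
  isUTree_treeOf (by rwa [sect_nil]) fun σ hσ =>
    not_uLarge_sect_append_singleton (hσ σ List.prefix_rfl)

lemma exists_sect_seg_eq_univ [TopologicalSpace A] (hY : IsOpen Y) (hs : s ∈ Y) :
    ∃ m, sect Y (seg s m) = Set.univ := by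
  obtain ⟨I, u, hu, hIY⟩ := isOpen_pi_iff.1 hY s hs
  refine ⟨I.sup id + 1, Set.eq_univ_of_forall fun t => hIY fun i hi => ?_⟩
  have hi_lt : i < I.sup id + 1 := Nat.lt_succ_of_le (Finset.le_sup (f := id) hi)
  rw [app_seg_of_lt s t hi_lt]
  exact (hu i hi).2

lemma uDetermined_of_isOpen [TopologicalSpace A] (hY : IsOpen Y) : UDetermined U Y := by
  refine or_iff_not_imp_left.2 fun h => ⟨_, isUTree_treeOf_not_uLarge h, ?_⟩
  refine Set.eq_empty_of_forall_notMem fun s ⟨hs_tree, hsY⟩ => ?_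
  obtain ⟨m, hm⟩ := exists_sect_seg_eq_univ hY hsY
  exact apply_seg_of_mem_branches_treeOf hs_tree m (hm ▸ uLarge_univ)

lemma uDetermined_iUnion (f : ℕ → Set (ℕ → A)) (hf : ∀ n, UMeasurable U (f n)) :
    UDetermined U (⋃ n, f n) := by
  refine or_iff_not_imp_left.2 fun h => ?_
  choose S hS hS_small using fun σ : List A =>
    exists_isUTree_imp (U := U) (p := ¬ ULarge U (sect (⋃ n, f n) σ))
      (q := fun T => branches T ∩ sect (f σ.length) σ = ∅) fun hσ =>
      (hf σ.length σ).resolve_left fun h' =>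
        hσ (h'.mono fun _ ht => Set.mem_iUnion.2 ⟨_, ht⟩)
  refine ⟨_, (isUTree_treeOf_not_uLarge h).inter (isUTree_diagInter hS), ?_⟩
  refine Set.eq_empty_of_forall_notMem fun s ⟨hs, hsX⟩ => ?_
  rw [branches_inter] at hs
  obtain ⟨n, hn⟩ := Set.mem_iUnion.1 hsX
  have h_small := hS_small _ (apply_seg_of_mem_branches_treeOf hs.1 n)
  rw [length_seg] at h_small
  refine h_small.subset ⟨shift_mem_branches_of_mem_branches_diagInter hs.2 n, ?_⟩
  rwa [sect, Set.mem_ofPred_eq, app_seg]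

lemma UMeasurable.sect (h : UMeasurable U X) (σ : List A) : UMeasurable U (sect X σ) :=
  fun τ => sect_sect X σ τ ▸ h (σ ++ τ)

lemma UMeasurable.compl (h : UMeasurable U X) : UMeasurable U Xᶜ :=
  fun σ => (h σ).compl

lemma UMeasurable.iUnion {f : ℕ → Set (ℕ → A)} (hf : ∀ n, UMeasurable U (f n)) :
    UMeasurable U (⋃ n, f n) := fun σ => by
  rw [sect_iUnion]
  exact uDetermined_iUnion _ fun n => (hf n).sect σ

lemma uMeasurable_of_isOpen [TopologicalSpace A] (hY : IsOpen Y) : UMeasurable U Y :=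
  fun σ => uDetermined_of_isOpen (isOpen_sect hY σ)

end UMeas

theorem stmt5_general {A : Type u} [TopologicalSpace A]
    (U : Ultrafilter A) (X : Set (ℕ → A))
    (hX : @MeasurableSet _ (borel (ℕ → A)) X) :
    UMeas.UMeasurable U X := by
  induction X, hX using MeasurableSpace.generateFrom_induction with
  | hC Y hY _ => exact UMeas.uMeasurable_of_isOpen hY
  | empty => exact UMeas.uMeasurable_of_isOpen isOpen_empty
  | compl Y _ hY => exact hY.compl
  | iUnion f _ hf => exact UMeas.UMeasurable.iUnion hf

theorem stmt5 {A : Type u} [TopologicalSpace A] [DiscreteTopology A]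
    (U : Ultrafilter A) (X : Set (ℕ → A))
    (hX : @MeasurableSet _ (borel (ℕ → A)) X) :
    UMeas.UMeasurable U X :=
  stmt5_general U X hX
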